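/- Let K be a division ring with center Z, and let C be an associative unital Z-algebra. In the Z-algebra R = K ⊗_Z C, an element r ∈ K ⊗_Z C commutes with k ⊗ 1 for all k ∈ K if and only if r lies in the image of the canonical map C → K ⊗_Z C, c ↦ 1 ⊗ c. -/
import Mathlib


open TensorProduct in
set_option synthInstance.maxHeartbeats 400000 in
set_option maxHeartbeats 1000000 in
/-- Lam, Thm 15.1: For a division ring `K` with centre `Z` and a
`Z`-algebra `C`, an element of `K ⊗[Z] C` centralizes `K ⊗ 1` iff it lies in `1 ⊗ C`. -/
theorem stmt_11 (K : Type*) [DivisionRing K]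
    (C : Type*) [Ring C] [Algebra (Subring.center K) C]
    (r : K ⊗[Subring.center K] C) :
    (∀ k : K, (k ⊗ₜ[Subring.center K] (1 : C)) * r = r * (k ⊗ₜ[Subring.center K] (1 : C)))
      ↔ r ∈ Set.range (fun c : C => (1 : K) ⊗ₜ[Subring.center K] c) := by
  classical
  constructor
  · intro h
    -- choose a basis of `C` over the centre `Z`
    let b := Module.Basis.ofVectorSpace (Subring.center K) C
    let E := TensorProduct.equivFinsuppOfBasisRight (M := K) b
    -- key computation: `E` intertwines multiplication by `k ⊗ 1`
    have key : ∀ (k : K) (x : K ⊗[Subring.center K] C)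
        (i : Module.Basis.ofVectorSpaceIndex (Subring.center K) C),
        E ((k ⊗ₜ[Subring.center K] (1 : C)) * x) i = k * E x i ∧
        E (x * (k ⊗ₜ[Subring.center K] (1 : C))) i = E x i * k := by
      intro k x i
      induction x with
      | zero => simp
      | tmul k' c =>
          have h1 : (k ⊗ₜ[Subring.center K] (1 : C)) * (k' ⊗ₜ[Subring.center K] c)
              = (k * k') ⊗ₜ[Subring.center K] c := by
            rw [Algebra.TensorProduct.tmul_mul_tmul, one_mul]
          have h2 : (k' ⊗ₜ[Subring.center K] c) * (k ⊗ₜ[Subring.center K] (1 : C))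
              = (k' * k) ⊗ₜ[Subring.center K] c := by
            rw [Algebra.TensorProduct.tmul_mul_tmul, mul_one]
          rw [h1, h2]
          rw [TensorProduct.equivFinsuppOfBasisRight_apply_tmul_apply,
            TensorProduct.equivFinsuppOfBasisRight_apply_tmul_apply,
            TensorProduct.equivFinsuppOfBasisRight_apply_tmul_apply]
          have hsd : ∀ y : K, (b.repr c i) • y = (↑(b.repr c i) : K) * y :=
            fun y => Subring.smul_def _ y
          have hc : ∀ g : K, g * (↑(b.repr c i) : K) = (↑(b.repr c i) : K) * g := by
            have := (b.repr c i).2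
            rw [Subring.mem_center_iff] at this
            exact this
          constructor
          · rw [hsd, hsd, ← mul_assoc, ← hc k, mul_assoc]
          · rw [hsd, hsd, mul_assoc]
      | add x y hx hy =>
          constructor
          · rw [mul_add, map_add, Finsupp.add_apply, hx.1, hy.1, map_add,
              Finsupp.add_apply, mul_add]
          · rw [add_mul, map_add, Finsupp.add_apply, hx.2, hy.2, map_add,
              Finsupp.add_apply, add_mul]
    -- hence every coefficient of `r` is central
    have hcen : ∀ i, E r i ∈ Subring.center K := by
      intro i
      rw [Subring.mem_center_iff]
      intro k
      have := key k r i
      rw [h k] at this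
      rw [← this.1, this.2]
    -- reconstruct `r` as `1 ⊗ c`
    refine ⟨∑ i ∈ (E r).support, (⟨E r i, hcen i⟩ : Subring.center K) • b i, ?_⟩
    have step : (1 : K) ⊗ₜ[Subring.center K]
          (∑ i ∈ (E r).support, (⟨E r i, hcen i⟩ : Subring.center K) • b i)
        = ∑ i ∈ (E r).support, (E r i) ⊗ₜ[Subring.center K] (b i) := by
      rw [TensorProduct.tmul_sum]
      refine Finset.sum_congr rfl fun i _ => ?_
      rw [TensorProduct.tmul_smul, TensorProduct.smul_tmul', Subring.smul_def, smul_eq_mul, mul_one]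
    beta_reduce
    rw [step]
    have hr : r = (TensorProduct.equivFinsuppOfBasisRight (M := K) b).symm (E r) :=
      (LinearEquiv.symm_apply_apply _ _).symm
    conv_rhs => rw [hr]
    rw [TensorProduct.equivFinsuppOfBasisRight_symm_apply]
    rfl
  · rintro ⟨c, rfl⟩ k
    simp only [Algebra.TensorProduct.tmul_mul_tmul, one_mul, mul_one]
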